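/- Let κ = 1 + √2. For every ζ* ∈ ℝ define α_i = ζ* − iπ/2 and D_i = √(2κ(√2 + cos α_i)) for i = 0, 1, 2, 3 (note √2 + cos α_i > 0, so D_i > 0), and define ω = √(κ/2) · [ sin ζ*/√(√2 + cos ζ*) − cos ζ*/√(√2 + sin ζ*) − sin ζ*/√(√2 − cos ζ*) + cos ζ*/√(√2 − sin ζ*) ]. Then there exist θ0, θ1, θ2, θ3 ∈ ℝ with cos θ_i = (κ + cos α_i)/D_i and sin θ_i = sin α_i/D_i for each i, and for any such θ0, θ1, θ2, θ3 the point (θ0, θ1, θ2, θ3, ζ*) is an equilibrium of the minimal frequency-spiral model with parameter ω. (This yields a one-parameter family of equilibria whose ω–ζ relation is exactly ω·√(2/κ) = sin ζ/(√2 + cos ζ)^{1/2} − cos ζ/(√2 + sin ζ)^{1/2} − sin ζ/(√2 − cos ζ)^{1/2} + cos ζ/(√2 − sin ζ)^{1/2}.) -/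

import Mathlib

/-!
Write `κ = 1 + √2` and `α = ζ - iπ/2`. Node `i` is at rest when `θ` is the argument of
`κ + e^{iα}`: then `sin (α - θ) = κ sin θ`. The modulus of `κ + e^{iα}` is
`√(κ² + 2κ cos α + 1) = √(2κ (√2 + cos α))`, because `κ² + 1 = 2√2 κ`; hence
`κ sin θ = √(κ/2) · sin α / √(√2 + cos α)`, and summing over the four quarter-turn shifts
of `ζ` gives the prescribed `ω`.
-/

open Real

/-- An equilibrium of the minimal frequency-spiral model with parameter `ω` and
`κ = 1 + √2`: all five right-hand sides of the ODE system vanish. -/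
def IsMinimalSpiralEquilibrium (ω θ0 θ1 θ2 θ3 ζ : ℝ) : Prop :=
  Real.sin (ζ - θ0) - (1 + Real.sqrt 2) * Real.sin θ0 = 0 ∧
  Real.sin (ζ - θ1 - Real.pi / 2) - (1 + Real.sqrt 2) * Real.sin θ1 = 0 ∧
  Real.sin (ζ - θ2 - Real.pi) - (1 + Real.sqrt 2) * Real.sin θ2 = 0 ∧
  Real.sin (ζ - θ3 - 3 * Real.pi / 2) - (1 + Real.sqrt 2) * Real.sin θ3 = 0 ∧
  ω - Real.sin (ζ - θ0) - Real.sin (ζ - θ1 - Real.pi / 2)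
    - Real.sin (ζ - θ2 - Real.pi) - Real.sin (ζ - θ3 - 3 * Real.pi / 2) = 0

theorem exists_cos_sin_eq_div_sqrt {x y : ℝ} (h : 0 < x ^ 2 + y ^ 2) :
    ∃ θ : ℝ, cos θ = x / √(x ^ 2 + y ^ 2) ∧ sin θ = y / √(x ^ 2 + y ^ 2) := by
  have hz : (⟨x, y⟩ : ℂ) ≠ 0 := by
    rintro ⟨rfl, rfl⟩
    norm_num at h
  refine ⟨Complex.arg ⟨x, y⟩, ?_, ?_⟩
  · rw [Complex.cos_arg hz, Complex.norm_eq_sqrt_sq_add_sq]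
  · rw [Complex.sin_arg, Complex.norm_eq_sqrt_sq_add_sq]

theorem sin_sub_eq_mul_sin_of_cos_sin_eq_div {κ α θ D : ℝ}
    (hc : cos θ = (κ + cos α) / D) (hs : sin θ = sin α / D) :
    sin (α - θ) = κ * sin θ := by
  rw [sin_sub, hc, hs]
  ring

theorem sqrt_two_add_cos_pos (α : ℝ) : 0 < √2 + cos α := by
  have : 1 < √2 := by rw [lt_sqrt zero_le_one]; norm_num
  linarith [neg_one_le_cos α]

theorem one_add_sqrt_two_add_cos_sq_add_sin_sq (α : ℝ) :
    (1 + √2 + cos α) ^ 2 + sin α ^ 2 = 2 * (1 + √2) * (√2 + cos α) := by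
  have h2 : √2 ^ 2 = 2 := sq_sqrt zero_le_two
  linear_combination sin_sq_add_cos_sq α - h2

theorem exists_minimalSpiral_phase (α : ℝ) :
    ∃ θ : ℝ, cos θ = (1 + √2 + cos α) / √(2 * (1 + √2) * (√2 + cos α)) ∧
      sin θ = sin α / √(2 * (1 + √2) * (√2 + cos α)) := by
  rw [← one_add_sqrt_two_add_cos_sq_add_sin_sq]
  apply exists_cos_sin_eq_div_sqrt
  rw [one_add_sqrt_two_add_cos_sq_add_sin_sq]
  have := sqrt_two_add_cos_pos α
  positivity

theorem div_sqrt_two_mul_mul {κ : ℝ} (hκ : 0 < κ) (s : ℝ) :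
    κ / √(2 * κ * s) = √(κ / 2) / √s := by
  have hκ' : √(κ / 2) * √(2 * κ) = κ := by
    rw [← sqrt_mul (by positivity), show κ / 2 * (2 * κ) = κ ^ 2 by ring, sqrt_sq hκ.le]
  have h2κ : √(2 * κ) ≠ 0 := (sqrt_pos.2 (by positivity)).ne'
  calc κ / √(2 * κ * s) = √(κ / 2) * √(2 * κ) / (√s * √(2 * κ)) := by
        rw [hκ', sqrt_mul (by positivity), mul_comm (√s)]
    _ = √(κ / 2) / √s := mul_div_mul_right _ _ h2κ

theorem minimalSpiral_node_balance {α θ : ℝ}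
    (hc : cos θ = (1 + √2 + cos α) / √(2 * (1 + √2) * (√2 + cos α)))
    (hs : sin θ = sin α / √(2 * (1 + √2) * (√2 + cos α))) :
    sin (α - θ) = (1 + √2) * sin θ ∧
      (1 + √2) * sin θ = √((1 + √2) / 2) * (sin α / √(√2 + cos α)) := by
  refine ⟨sin_sub_eq_mul_sin_of_cos_sin_eq_div hc hs, ?_⟩
  calc (1 + √2) * sin θ = (1 + √2) / √(2 * (1 + √2) * (√2 + cos α)) * sin α := by
        rw [hs]; ring
    _ = √((1 + √2) / 2) / √(√2 + cos α) * sin α := by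
        rw [div_sqrt_two_mul_mul (by positivity)]
    _ = √((1 + √2) / 2) * (sin α / √(√2 + cos α)) := by ring

theorem isMinimalSpiralEquilibrium_of_sin_sub_eq {ω θ0 θ1 θ2 θ3 ζ : ℝ}
    (h0 : sin (ζ - θ0) = (1 + √2) * sin θ0)
    (h1 : sin (ζ - π / 2 - θ1) = (1 + √2) * sin θ1)
    (h2 : sin (ζ - π - θ2) = (1 + √2) * sin θ2)
    (h3 : sin (ζ - π - π / 2 - θ3) = (1 + √2) * sin θ3)
    (hω : ω = (1 + √2) * (sin θ0 + sin θ1 + sin θ2 + sin θ3)) :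
    IsMinimalSpiralEquilibrium ω θ0 θ1 θ2 θ3 ζ := by
  rw [show ζ - π / 2 - θ1 = ζ - θ1 - π / 2 by ring] at h1
  rw [show ζ - π - θ2 = ζ - θ2 - π by ring] at h2
  rw [show ζ - π - π / 2 - θ3 = ζ - θ3 - 3 * π / 2 by ring] at h3
  refine ⟨by rw [h0]; ring, by rw [h1]; ring, by rw [h2]; ring, by rw [h3]; ring, ?_⟩
  rw [hω, h0, h1, h2, h3]
  ring

/-- For every `ζ* ∈ ℝ`, with `κ = 1 + √2`, `α_i = ζ* − iπ/2`,
`D_i = √(2κ(√2 + cos α_i)) > 0`, and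
`ω = √(κ/2)·[sin ζ*/√(√2+cos ζ*) − cos ζ*/√(√2+sin ζ*) − sin ζ*/√(√2−cos ζ*)
 + cos ζ*/√(√2−sin ζ*)]`, there exist `θ0, θ1, θ2, θ3` with
`cos θ_i = (κ + cos α_i)/D_i` and `sin θ_i = sin α_i/D_i`, and any such
`(θ0, θ1, θ2, θ3, ζ*)` is an equilibrium of the minimal frequency-spiral model with
parameter `ω`. -/
theorem minimalSpiral_equilibrium_family (ζ : ℝ) :
    let κ : ℝ := 1 + Real.sqrt 2
    let α : ℕ → ℝ := fun i => ζ - (i : ℝ) * (Real.pi / 2)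
    let D : ℕ → ℝ := fun i => Real.sqrt (2 * κ * (Real.sqrt 2 + Real.cos (α i)))
    let ω : ℝ := Real.sqrt (κ / 2) *
      (Real.sin ζ / Real.sqrt (Real.sqrt 2 + Real.cos ζ)
        - Real.cos ζ / Real.sqrt (Real.sqrt 2 + Real.sin ζ)
        - Real.sin ζ / Real.sqrt (Real.sqrt 2 - Real.cos ζ)
        + Real.cos ζ / Real.sqrt (Real.sqrt 2 - Real.sin ζ))
    (∃ θ0 θ1 θ2 θ3 : ℝ,
      (Real.cos θ0 = (κ + Real.cos (α 0)) / D 0 ∧ Real.sin θ0 = Real.sin (α 0) / D 0) ∧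
      (Real.cos θ1 = (κ + Real.cos (α 1)) / D 1 ∧ Real.sin θ1 = Real.sin (α 1) / D 1) ∧
      (Real.cos θ2 = (κ + Real.cos (α 2)) / D 2 ∧ Real.sin θ2 = Real.sin (α 2) / D 2) ∧
      (Real.cos θ3 = (κ + Real.cos (α 3)) / D 3 ∧ Real.sin θ3 = Real.sin (α 3) / D 3)) ∧
    ∀ θ0 θ1 θ2 θ3 : ℝ,
      (Real.cos θ0 = (κ + Real.cos (α 0)) / D 0 ∧ Real.sin θ0 = Real.sin (α 0) / D 0) →
      (Real.cos θ1 = (κ + Real.cos (α 1)) / D 1 ∧ Real.sin θ1 = Real.sin (α 1) / D 1) →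
      (Real.cos θ2 = (κ + Real.cos (α 2)) / D 2 ∧ Real.sin θ2 = Real.sin (α 2) / D 2) →
      (Real.cos θ3 = (κ + Real.cos (α 3)) / D 3 ∧ Real.sin θ3 = Real.sin (α 3) / D 3) →
      IsMinimalSpiralEquilibrium ω θ0 θ1 θ2 θ3 ζ := by
  intro κ α D ω
  refine ⟨?_, fun θ0 θ1 θ2 θ3 h0 h1 h2 h3 => ?_⟩
  · choose θ hθ using exists_minimalSpiral_phase
    exact ⟨θ (α 0), θ (α 1), θ (α 2), θ (α 3), hθ _, hθ _, hθ _, hθ _⟩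
  obtain ⟨e0, f0⟩ := minimalSpiral_node_balance h0.1 h0.2
  obtain ⟨e1, f1⟩ := minimalSpiral_node_balance h1.1 h1.2
  obtain ⟨e2, f2⟩ := minimalSpiral_node_balance h2.1 h2.2
  obtain ⟨e3, f3⟩ := minimalSpiral_node_balance h3.1 h3.2
  have hα0 : α 0 = ζ := by simp only [α]; push_cast; ring
  have hα1 : α 1 = ζ - π / 2 := by simp only [α]; push_cast; ring
  have hα2 : α 2 = ζ - π := by simp only [α]; push_cast; ring
  have hα3 : α 3 = ζ - π - π / 2 := by simp only [α]; push_cast; ring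
  rw [hα0] at e0 f0
  rw [hα1] at e1 f1
  rw [hα2] at e2 f2
  rw [hα3] at e3 f3
  rw [sin_sub_pi_div_two, cos_sub_pi_div_two] at f1
  rw [sin_sub_pi, cos_sub_pi] at f2
  rw [sin_sub_pi_div_two, cos_sub_pi_div_two, sin_sub_pi, cos_sub_pi] at f3
  refine isMinimalSpiralEquilibrium_of_sin_sub_eq e0 e1 e2 e3 ?_
  simp only [ω, κ]
  linear_combination -(f0 + f1 + f2 + f3)
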